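/- arXiv:1112.4088 — 2 statements merged into one kernel-verified Lean document; each statement's English description precedes it below -/
import Mathlib

section
/- Let Γ be the semidirect product (ℚ³ ⊕ ℚ³) ⋊ SL(3,ℚ) and α ∈ ℝ. Define Ω̃_α : Γ × Γ → S¹ by Ω̃_α((v,A),(w,B)) = Ω_α(v, A · w). Then Ω̃_α is a normalized 2-cocycle on Γ: for all g, h, k ∈ Γ one has Ω̃_α(g,h) · Ω̃_α(gh, k) = Ω̃_α(g, hk) · Ω̃_α(h,k), and Ω̃_α(g, e) = Ω̃_α(e, g) = 1. Moreover Ω̃_α restricts to Ω_α on the subgroup ℚ³ ⊕ ℚ³. -/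
open Matrix

/-- The multiplicative group structure on `AddAut A` of the older Mathlib
(Mathlib now makes `AddAut A` an additive group). -/
instance AddAut.oldGroup {A : Type*} [Add A] : Group (AddAut A) where
  mul g h := AddEquiv.trans h g
  one := AddEquiv.refl _
  inv := AddEquiv.symm
  mul_assoc _ _ _ := rfl
  one_mul _ := rfl
  mul_one _ := rfl
  inv_mul_cancel := AddEquiv.self_trans_symm

/-- The additive group `R³ ⊕ R³`. -/
abbrev VV (R : Type*) := (Fin 3 → R) × (Fin 3 → R)

/-- Transpose, as a map on `SL(3,R)`. -/
def transposeSL {R : Type*} [CommRing R] (A : Matrix.SpecialLinearGroup (Fin 3) R) :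
    Matrix.SpecialLinearGroup (Fin 3) R :=
  ⟨A.val.transpose, by rw [Matrix.det_transpose]; exact A.prop⟩

/-- The group homomorphism `A ↦ (Aᵀ)⁻¹` on `SL(3,R)`. -/
def dualHom {R : Type*} [CommRing R] :
    Matrix.SpecialLinearGroup (Fin 3) R →* Matrix.SpecialLinearGroup (Fin 3) R where
  toFun A := (transposeSL A)⁻¹
  map_one' := by
    show (transposeSL 1)⁻¹ = 1
    rw [show transposeSL (1 : Matrix.SpecialLinearGroup (Fin 3) R) = 1 from
      Subtype.ext (by simp [transposeSL]), inv_one]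
  map_mul' A B := by
    show (transposeSL (A * B))⁻¹ = (transposeSL A)⁻¹ * (transposeSL B)⁻¹
    have h : transposeSL (A * B) = transposeSL B * transposeSL A :=
      Subtype.ext (by simp [transposeSL, Matrix.transpose_mul]; rfl)
    rw [h, _root_.mul_inv_rev]

/-- Linear automorphisms as additive automorphisms, as a group homomorphism. -/
def linToAddAut {R : Type*} [CommRing R] :
    ((Fin 3 → R) ≃ₗ[R] (Fin 3 → R)) →* AddAut (Fin 3 → R) where
  toFun e := e.toAddEquiv
  map_one' := rfl
  map_mul' _ _ := rfl

/-- Pairs of additive automorphisms give additive automorphisms of the product. -/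
def addAutProd {R : Type*} [CommRing R] :
    AddAut (Fin 3 → R) × AddAut (Fin 3 → R) →* AddAut (VV R) where
  toFun p := AddEquiv.prodCongr p.1 p.2
  map_one' := rfl
  map_mul' _ _ := rfl

/-- The action of `SL(3,R)` on `R³ ⊕ R³` given by `A · (x,y) = (Ax, (Aᵀ)⁻¹y)`,
as a homomorphism into additive automorphisms. -/
noncomputable def sl3Act {R : Type*} [CommRing R] :
    Matrix.SpecialLinearGroup (Fin 3) R →* AddAut (VV R) :=
  addAutProd.comp
    (((linToAddAut.comp Matrix.SpecialLinearGroup.toLin')).prod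
      ((linToAddAut.comp Matrix.SpecialLinearGroup.toLin').comp dualHom))

/-- Additive automorphisms as multiplicative automorphisms of `Multiplicative`. -/
def addAutToMulAut {A : Type*} [AddGroup A] : AddAut A →* MulAut (Multiplicative A) where
  toFun e := AddEquiv.toMultiplicative e
  map_one' := rfl
  map_mul' _ _ := rfl

/-- The action of `SL(3,R)` on `Multiplicative (R³ ⊕ R³)`. -/
noncomputable def sl3ActM (R : Type*) [CommRing R] :
    Matrix.SpecialLinearGroup (Fin 3) R →* MulAut (Multiplicative (VV R)) :=
  addAutToMulAut.comp sl3Act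

/-- The group `Γ_R = (R³ ⊕ R³) ⋊ SL(3,R)`. -/
abbrev GammaR (R : Type*) [CommRing R] :=
  SemidirectProduct (Multiplicative (VV R)) (Matrix.SpecialLinearGroup (Fin 3) R) (sl3ActM R)

/-- Coordinatewise integer casting `ℤ³ → ℚ³` as an additive homomorphism. -/
def intCast3 : (Fin 3 → ℤ) →+ (Fin 3 → ℚ) := (Int.castAddHom ℚ).compLeft (Fin 3)

/-- The inclusion `ℤ³ ⊕ ℤ³ → ℚ³ ⊕ ℚ³`. -/
def intVec : VV ℤ →+ VV ℚ := intCast3.prodMap intCast3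

/-- The subgroup `Λ = ℤ³ ⊕ ℤ³` of `Γ = (ℚ³ ⊕ ℚ³) ⋊ SL(3,ℚ)`. -/
noncomputable def LambdaSub : Subgroup (GammaR ℚ) :=
  (AddSubgroup.toSubgroup intVec.range).map SemidirectProduct.inl

/-- The dot product on `R³`. -/
def dotR {R : Type*} [CommRing R] (x y : Fin 3 → R) : R := ∑ i, x i * y i

/-- The 2-cocycle `Ω_α` on `ℚ³ ⊕ ℚ³`. -/
noncomputable def OmegaQ (α : ℝ) (g h : VV ℚ) : Circle :=
  Circle.exp (2 * Real.pi * α * ((dotR g.1 h.2 - dotR g.2 h.1 : ℚ) : ℝ))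

/-- The extension `Ω̃_α` of `Ω_α` to `Γ = (ℚ³ ⊕ ℚ³) ⋊ SL(3,ℚ)`. -/
noncomputable def OmegaT (α : ℝ) (g h : GammaR ℚ) : Circle :=
  OmegaQ α (Multiplicative.toAdd g.left) (sl3Act g.right (Multiplicative.toAdd h.left))

/-!
`Ω_α` is the character `q ↦ exp(2πiαq)` of `ℚ` applied to the symplectic form
`σ((x,y),(x',y')) = ⟨x,y'⟩ - ⟨y,x'⟩`. A character of a biadditive form is a normalized
2-cocycle, and `σ` is `SL(3)`-invariant because `⟨Ax, (Aᵀ)⁻¹y⟩ = ⟨x,y⟩`. For a `G`-invariant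
2-cocycle `c` on `N`, the function `((a,g),(b,h)) ↦ c(a, g·b)` is a 2-cocycle on `N ⋊ G`: its
cocycle identity at `(a,g), (b,h), (d,k)` is the cocycle identity of `c` at `a, g·b, gh·d`,
after invariance is used to rewrite `c(b, h·d)` as `c(g·b, gh·d)`.
-/

namespace SemidirectProduct

variable {N G M : Type*} [Group N] [Group G] (φ : G →* MulAut N)

def liftCocycle (c : N → N → M) (x y : N ⋊[φ] G) : M :=
  c x.left (φ x.right y.left)

variable {φ}

theorem liftCocycle_mul_liftCocycle [Mul M] {c : N → N → M}
    (hc : ∀ a b d, c a b * c (a * b) d = c a (b * d) * c b d)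
    (hφ : ∀ g a b, c (φ g a) (φ g b) = c a b) (x y z : N ⋊[φ] G) :
    liftCocycle φ c x y * liftCocycle φ c (x * y) z =
      liftCocycle φ c x (y * z) * liftCocycle φ c y z := by
  simp only [liftCocycle, mul_left, mul_right, map_mul, MulAut.mul_apply]
  rw [hc, ← hφ x.right y.left]

theorem liftCocycle_one_right [One M] {c : N → N → M} (hc : ∀ a, c a 1 = 1)
    (x : N ⋊[φ] G) : liftCocycle φ c x 1 = 1 := by
  rw [liftCocycle, one_left, map_one, hc]

theorem liftCocycle_one_left [One M] {c : N → N → M} (hc : ∀ a, c 1 a = 1)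
    (x : N ⋊[φ] G) : liftCocycle φ c 1 x = 1 :=
  hc _

@[simp]
theorem liftCocycle_inl (c : N → N → M) (a b : N) :
    liftCocycle φ c (inl a) (inl b) = c a b := by
  simp [liftCocycle]

end SemidirectProduct

theorem AddChar.map_biadditive_mul_map_biadditive {V A M : Type*} [Add V] [AddCommMonoid A]
    [CommMonoid M] (ψ : AddChar A M) {σ : V → V → A}
    (hl : ∀ a b d, σ (a + b) d = σ a d + σ b d) (hr : ∀ a b d, σ a (b + d) = σ a b + σ a d)
    (a b d : V) :
    ψ (σ a b) * ψ (σ (a + b) d) = ψ (σ a (b + d)) * ψ (σ b d) := by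
  simp only [hl, hr, ψ.map_add_eq_mul]
  ac_rfl

section Symplectic

variable {R : Type*} [CommRing R]

theorem dotR_eq_dotProduct (x y : Fin 3 → R) : dotR x y = x ⬝ᵥ y := rfl

def symplecticForm (u v : VV R) : R := dotR u.1 v.2 - dotR u.2 v.1

theorem symplecticForm_add_left (u u' v : VV R) :
    symplecticForm (u + u') v = symplecticForm u v + symplecticForm u' v := by
  simp only [symplecticForm, dotR_eq_dotProduct, Prod.fst_add, Prod.snd_add, add_dotProduct]
  ring

theorem symplecticForm_add_right (u v v' : VV R) :
    symplecticForm u (v + v') = symplecticForm u v + symplecticForm u v' := by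
  simp only [symplecticForm, dotR_eq_dotProduct, Prod.fst_add, Prod.snd_add, dotProduct_add]
  ring

@[simp]
theorem symplecticForm_zero_left (v : VV R) : symplecticForm 0 v = 0 := by
  simp [symplecticForm, dotR_eq_dotProduct]

@[simp]
theorem symplecticForm_zero_right (u : VV R) : symplecticForm u 0 = 0 := by
  simp [symplecticForm, dotR_eq_dotProduct]

theorem sl3Act_apply (A : Matrix.SpecialLinearGroup (Fin 3) R) (u : VV R) :
    sl3Act A u = (A.val *ᵥ u.1, adjugate A.valᵀ *ᵥ u.2) := by
  have hdual : ((dualHom A : Matrix.SpecialLinearGroup (Fin 3) R) : Matrix (Fin 3) (Fin 3) R) =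
      adjugate A.valᵀ :=
    Matrix.SpecialLinearGroup.coe_inv (transposeSL A)
  change (Matrix.SpecialLinearGroup.toLin' A u.1,
    Matrix.SpecialLinearGroup.toLin' (dualHom A) u.2) = _
  simp [Matrix.SpecialLinearGroup.toLin'_apply, hdual]

theorem dotProduct_mulVec_adjugate_transpose_mulVec (A : Matrix.SpecialLinearGroup (Fin 3) R)
    (x y : Fin 3 → R) : (A.val *ᵥ x) ⬝ᵥ (adjugate A.valᵀ *ᵥ y) = x ⬝ᵥ y := by
  rw [dotProduct_mulVec, ← vecMul_transpose, vecMul_vecMul, mul_adjugate, det_transpose,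
    A.prop, one_smul, vecMul_one]

theorem symplecticForm_sl3Act (A : Matrix.SpecialLinearGroup (Fin 3) R) (u v : VV R) :
    symplecticForm (sl3Act A u) (sl3Act A v) = symplecticForm u v := by
  simp only [symplecticForm, dotR_eq_dotProduct, sl3Act_apply]
  rw [dotProduct_comm (adjugate _ *ᵥ _), dotProduct_mulVec_adjugate_transpose_mulVec,
    dotProduct_mulVec_adjugate_transpose_mulVec, dotProduct_comm v.1]

end Symplectic

noncomputable def ratCircleChar (α : ℝ) : AddChar ℚ Circle :=
  Real.fourierChar.compAddMonoidHom ((AddMonoidHom.mulLeft α).comp (Rat.castHom ℝ))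

section OmegaQ

variable (α : ℝ)

theorem OmegaQ_eq_ratCircleChar (u v : VV ℚ) :
    OmegaQ α u v = ratCircleChar α (symplecticForm u v) := by
  simp [OmegaQ, ratCircleChar, symplecticForm, Real.fourierChar_apply', mul_assoc]

theorem OmegaQ_mul_OmegaQ (u v w : VV ℚ) :
    OmegaQ α u v * OmegaQ α (u + v) w = OmegaQ α u (v + w) * OmegaQ α v w := by
  simp only [OmegaQ_eq_ratCircleChar]
  exact (ratCircleChar α).map_biadditive_mul_map_biadditive symplecticForm_add_left
    symplecticForm_add_right u v w

theorem OmegaQ_sl3Act (A : Matrix.SpecialLinearGroup (Fin 3) ℚ) (u v : VV ℚ) :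
    OmegaQ α (sl3Act A u) (sl3Act A v) = OmegaQ α u v := by
  rw [OmegaQ_eq_ratCircleChar, OmegaQ_eq_ratCircleChar, symplecticForm_sl3Act]

theorem OmegaQ_zero_left (v : VV ℚ) : OmegaQ α 0 v = 1 := by
  simp [OmegaQ_eq_ratCircleChar]

theorem OmegaQ_zero_right (u : VV ℚ) : OmegaQ α u 0 = 1 := by
  simp [OmegaQ_eq_ratCircleChar]

end OmegaQ

open SemidirectProduct in
theorem OmegaT_eq_liftCocycle (α : ℝ) :
    OmegaT α = liftCocycle (sl3ActM ℚ)
      (fun a b => OmegaQ α (Multiplicative.toAdd a) (Multiplicative.toAdd b)) :=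
  rfl

/-- `Ω̃_α((v,A),(w,B)) = Ω_α(v, A·w)` is a normalized 2-cocycle on
`Γ = (ℚ³ ⊕ ℚ³) ⋊ SL(3,ℚ)` restricting to `Ω_α` on the subgroup `ℚ³ ⊕ ℚ³`. -/
theorem OmegaT_is_normalized_cocycle (α : ℝ) :
    (∀ g h k : GammaR ℚ,
      OmegaT α g h * OmegaT α (g * h) k = OmegaT α g (h * k) * OmegaT α h k) ∧
    (∀ g : GammaR ℚ, OmegaT α g 1 = 1 ∧ OmegaT α 1 g = 1) ∧
    (∀ v w : VV ℚ,
      OmegaT α (SemidirectProduct.inl (Multiplicative.ofAdd v))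
        (SemidirectProduct.inl (Multiplicative.ofAdd w)) = OmegaQ α v w) := by
  rw [OmegaT_eq_liftCocycle]
  refine ⟨fun g h k => ?_, fun g => ⟨?_, ?_⟩, fun v w => SemidirectProduct.liftCocycle_inl _ _ _⟩
  · exact SemidirectProduct.liftCocycle_mul_liftCocycle
      (fun a b d => OmegaQ_mul_OmegaQ α a.toAdd b.toAdd d.toAdd)
      (fun A a b => OmegaQ_sl3Act α A a.toAdd b.toAdd) g h k
  · exact SemidirectProduct.liftCocycle_one_right (fun a => OmegaQ_zero_right α a.toAdd) g
  · exact SemidirectProduct.liftCocycle_one_left (fun a => OmegaQ_zero_left α a.toAdd) g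
end

section
/- For α, β ∈ [0, 1/2) with α ≠ β, the restrictions of Ω_α and Ω_β to ℤ³ ⊕ ℤ³ are not cohomologous: there is no map μ : ℤ³ ⊕ ℤ³ → S¹ such that Ω_α(g,h) = μ(g) μ(h) μ(g+h)⁻¹ Ω_β(g,h) for all g, h ∈ ℤ³ ⊕ ℤ³. In particular, the family {Ω_α restricted to ℤ³ ⊕ ℤ³ : α ∈ [0,1/2)} consists of uncountably many pairwise non-cohomologous circle-valued 2-cocycles. -/
open Matrix

/-- The multiplicative group structure on `AddAut A` of the older Mathlib
(`e₁ * e₂ = e₂.trans e₁`), which current Mathlib replaced by an additive one. -/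
instance addAutGroupOld {A : Type*} [Add A] : Group (AddAut A) where
  mul g h := AddEquiv.trans h g
  one := AddEquiv.refl _
  inv := AddEquiv.symm
  mul_assoc _ _ _ := rfl
  one_mul _ := rfl
  mul_one _ := rfl
  inv_mul_cancel := AddEquiv.self_trans_symm

/-! On an abelian group every coboundary `μ g * μ h * (μ (g + h))⁻¹` is symmetric in `g, h`, so
the antisymmetrisation `Ω g h / Ω h g` of a 2-cocycle is an invariant of its cohomology class.
For `Ω_α` it is `Ω_α(g,h)²`, which on `g = (e₁, 0)`, `h = (0, e₁)` equals `exp(4πiα)`; and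
`α ↦ exp(4πiα)` is injective on `[0, 1/2)`. -/

lemma div_swap_eq_of_cohomologous {G M : Type*} [AddCommMagma G] [CommGroup M]
    {Ω Ω' : G → G → M} {μ : G → M} (hΩ : ∀ g h, Ω g h = μ g * μ h * (μ (g + h))⁻¹ * Ω' g h)
    (g h : G) : Ω g h / Ω h g = Ω' g h / Ω' h g := by
  rw [hΩ g h, hΩ h g, add_comm h g, mul_comm (μ h) (μ g), mul_div_mul_left_eq_div]

lemma dotR_sub_dotR_swap {R : Type*} [CommRing R] (x y x' y' : Fin 3 → R) :
    dotR x' y - dotR y' x = -(dotR x y' - dotR y x') := by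
  simp only [dotR, mul_comm (x' _), mul_comm (y' _)]
  ring

lemma OmegaQ_swap (α : ℝ) (g h : VV ℚ) : OmegaQ α h g = (OmegaQ α g h)⁻¹ := by
  rw [OmegaQ, OmegaQ, dotR_sub_dotR_swap, ← Circle.exp_neg]
  push_cast
  ring_nf

lemma OmegaQ_div_swap (α : ℝ) (g h : VV ℚ) : OmegaQ α g h / OmegaQ α h g = OmegaQ α g h ^ 2 := by
  rw [OmegaQ_swap α g h, div_inv_eq_mul, sq]

lemma OmegaQ_intVec_single (α : ℝ) :
    OmegaQ α (intVec (Pi.single 0 1, 0)) (intVec (0, Pi.single 0 1)) =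
      Circle.exp (2 * Real.pi * α) := by
  simp [OmegaQ, dotR, intVec, intCast3, Pi.single_apply]

lemma OmegaQ_div_swap_intVec_single (α : ℝ) :
    OmegaQ α (intVec (Pi.single 0 1, 0)) (intVec (0, Pi.single 0 1)) /
        OmegaQ α (intVec (0, Pi.single 0 1)) (intVec (Pi.single 0 1, 0)) =
      Circle.exp (4 * Real.pi * α) := by
  rw [OmegaQ_div_swap, OmegaQ_intVec_single, sq, ← Circle.exp_add]
  ring_nf

lemma eq_of_circleExp_four_pi_mul_eq {α β : ℝ} (hα : α ∈ Set.Ico (0 : ℝ) (1 / 2))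
    (hβ : β ∈ Set.Ico (0 : ℝ) (1 / 2))
    (h : Circle.exp (4 * Real.pi * α) = Circle.exp (4 * Real.pi * β)) : α = β := by
  have hmem : ∀ γ ∈ Set.Ico (0 : ℝ) (1 / 2), 4 * Real.pi * γ ∈ Set.Ico 0 (0 + 2 * Real.pi) := by
    rintro γ ⟨h0, h1⟩
    constructor <;> nlinarith [Real.pi_pos]
  have := Circle.exp_injOn_Ico (by simp) (hmem α hα) (hmem β hβ) h
  nlinarith [Real.pi_pos]

/-- For `α, β ∈ [0, 1/2)` with `α ≠ β`, the restrictions of `Ω_α` and `Ω_β`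
to `ℤ³ ⊕ ℤ³` are not cohomologous. -/
theorem not_cohomologous_of_ne (α β : ℝ)
    (hα : α ∈ Set.Ico (0 : ℝ) (1 / 2)) (hβ : β ∈ Set.Ico (0 : ℝ) (1 / 2)) (hne : α ≠ β) :
    ¬ ∃ μ : VV ℤ → Circle, ∀ g h : VV ℤ,
      OmegaQ α (intVec g) (intVec h) =
        μ g * μ h * (μ (g + h))⁻¹ * OmegaQ β (intVec g) (intVec h) := by
  rintro ⟨μ, hμ⟩
  have hinv := div_swap_eq_of_cohomologous hμ (Pi.single 0 1, 0) (0, Pi.single 0 1)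
  rw [OmegaQ_div_swap_intVec_single, OmegaQ_div_swap_intVec_single] at hinv
  exact hne (eq_of_circleExp_four_pi_mul_eq hα hβ hinv)
end
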